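/- arXiv:math/9804041 — 4 statements merged into one kernel-verified Lean document; each statement's English description precedes it below -/
import Mathlib

section
/- Let A be a commutative ring, let x = (x_1, …, x_f) and y = (y_1, …, y_e) be finite families of elements of A, and let R = (e)^f be the rectangular partition with f parts equal to e. Then s_R(x − y) = ∏_{i=1}^{f} ∏_{j=1}^{e} (x_i − y_j). (Geometrically this is the identity s_{(e)^f}(F − E) = c_top(Hom(E, F)) used in the paper to compute the class [Z] of the zero scheme.) -/
open scoped BigOperators

/-- The generating series `∏_j (1 − y_j t) · ∏_i (1 − x_i t)⁻¹`, where the inverse of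
`1 − x_i t` is the geometric series `∑ x_i^n t^n`. -/
noncomputable def genSeries {A : Type*} [CommRing A] {f e : ℕ} (x : Fin f → A) (y : Fin e → A) :
    PowerSeries A :=
  (∏ j : Fin e, (1 - PowerSeries.C (y j) * PowerSeries.X)) *
    ∏ i : Fin f, PowerSeries.mk fun n => x i ^ n

/-- `h_k(x − y)`: the coefficient of `t^k` in the generating series, zero for `k < 0`. -/
noncomputable def hSuper {A : Type*} [CommRing A] {f e : ℕ} (x : Fin f → A) (y : Fin e → A)
    (k : ℤ) : A :=
  if k < 0 then 0 else PowerSeries.coeff k.toNat (genSeries x y)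

/-- The (super)symmetric Schur determinant `s_I(x − y) = det(h_{I_i + j − i}(x − y))`
for an arbitrary integer sequence `I` of length `p`. -/
noncomputable def schurDet {A : Type*} [CommRing A] {f e p : ℕ} (x : Fin f → A) (y : Fin e → A)
    (I : Fin p → ℤ) : A :=
  Matrix.det (Matrix.of fun i j : Fin p => hSuper x y (I i + (j : ℤ) - (i : ℤ)))

/-!
Write `G_s = ∏_j (1 - y_j t) · ∏_{i ∈ s} (1 - x_i t)⁻¹`. Multiplying row `k` of the Jacobi–Trudi
matrix by `∏_{l > k} (1 - x_l t)` is an upper unitriangular row operation; it produces the flagged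
matrix whose row `k` is read off `G_{≤ k}` instead of `G_{≤ f-1}`. Since `(1 - x_k t) G_{≤ k} =
G_{< k}`, appending a variable `c` to `y` multiplies the flagged matrix on the left by the lower
bidiagonal matrix with diagonal `x_k - c` and ones below it (multiplication by `t - c` in the Newton
basis `∏_{i < k} (t - x_i)`). Induction on the length of `y` ends at a unitriangular matrix.
-/

open PowerSeries Finset Matrix

namespace PowerSeries

variable {A : Type*} [CommRing A]

noncomputable def coeffInt (n : ℤ) (F : A⟦X⟧) : A :=
  if n < 0 then 0 else coeff n.toNat F

theorem coeffInt_of_neg {n : ℤ} (hn : n < 0) (F : A⟦X⟧) : coeffInt n F = 0 :=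
  if_pos hn

@[simp]
theorem coeffInt_natCast (n : ℕ) (F : A⟦X⟧) : coeffInt n F = coeff n F := by
  simp [coeffInt]

theorem coeffInt_zero (F : A⟦X⟧) : coeffInt 0 F = constantCoeff F := by
  simpa using coeffInt_natCast 0 F

theorem coeffInt_one_sub_C_mul_X_mul (a : A) (F : A⟦X⟧) (n : ℤ) :
    coeffInt n ((1 - C a * X) * F) = coeffInt n F - a * coeffInt (n - 1) F := by
  rcases lt_or_ge n 0 with hn | hn
  · simp [coeffInt_of_neg hn, coeffInt_of_neg (show n - 1 < 0 by omega)]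
  lift n to ℕ using hn
  rw [sub_mul, one_mul, mul_assoc]
  rcases n with _ | m
  · simp [coeffInt_zero, coeffInt_of_neg (show (-1 : ℤ) < 0 by norm_num)]
  · rw [show ((m + 1 : ℕ) : ℤ) - 1 = (m : ℕ) by omega]
    simp only [coeffInt_natCast, map_sub, coeff_C_mul, coeff_succ_X_mul]

theorem coeffInt_prod_one_sub_C_mul_X {ι : Type*} (s : Finset ι) (a : ι → A) {n : ℤ}
    (hn : #s < n) : coeffInt n (∏ i ∈ s, (1 - C (a i) * X)) = 0 := by
  classical
  induction s using Finset.induction_on generalizing n with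
  | empty =>
    rw [card_empty, Nat.cast_zero] at hn
    lift n to ℕ using hn.le
    simp [coeff_one, show n ≠ 0 by omega]
  | insert i s hi ih =>
    rw [card_insert_of_notMem hi] at hn
    rw [prod_insert hi, coeffInt_one_sub_C_mul_X_mul, ih (by omega), ih (by omega), mul_zero,
      sub_zero]

theorem coeffInt_mul {F : A⟦X⟧} {D : ℕ} (hF : ∀ r, D ≤ r → coeff r F = 0) (G : A⟦X⟧) (n : ℤ) :
    coeffInt n (F * G) = ∑ r ∈ range D, coeff r F * coeffInt (n - r) G := by
  rcases lt_or_ge n 0 with hn | hn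
  · rw [coeffInt_of_neg hn]
    exact (sum_eq_zero fun r _ => by rw [coeffInt_of_neg (by omega), mul_zero]).symm
  lift n to ℕ using hn
  rw [coeffInt_natCast, coeff_mul, Nat.sum_antidiagonal_eq_sum_range_succ_mk]
  have hsum : ∀ a, D ≤ a ∨ n < a → a ≤ n + 1 + D →
      ∑ r ∈ range a, coeff r F * coeffInt (n - r) G =
        ∑ r ∈ range (n + 1 + D), coeff r F * coeffInt (n - r) G := fun a ha ha' =>
    sum_subset (range_subset_range.2 ha') fun r hr hra => by
      simp only [mem_range] at hr hra
      rcases le_or_gt D r with hD | hD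
      · rw [hF r hD, zero_mul]
      · rw [coeffInt_of_neg (by omega), mul_zero]
  rw [hsum D (by omega) (by omega), ← hsum (n + 1) (by omega) (by omega)]
  refine sum_congr rfl fun r hr => ?_
  rw [mem_range] at hr
  rw [show (n : ℤ) - r = (n - r : ℕ) by omega, coeffInt_natCast]

theorem one_sub_C_mul_X_mul_mk_pow (a : A) : (1 - C a * X) * mk (a ^ ·) = 1 := by
  simpa [rescale_mk, rescale_X, mul_comm] using congrArg (rescale a) (mk_one_mul_one_sub_eq_one A)

end PowerSeries

namespace Matrix

variable {R : Type*} [CommRing R] {n : ℕ}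

def lowerBidiagonal (d : Fin n → R) : Matrix (Fin n) (Fin n) R :=
  of fun k l => if k = l then d k else if (l : ℕ) + 1 = k then 1 else 0

theorem det_lowerBidiagonal (d : Fin n → R) : (lowerBidiagonal d).det = ∏ k, d k := by
  rw [det_of_isLowerTriangular]
  · simp [lowerBidiagonal]
  · intro k l (hkl : k < l)
    have := Fin.lt_def.1 hkl
    simp only [lowerBidiagonal, of_apply, hkl.ne, if_false]
    exact if_neg (by omega)

theorem lowerBidiagonal_mul_apply (d : Fin n → R) (N : Matrix (Fin n) (Fin n) R) (k j : Fin n) :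
    (lowerBidiagonal d * N) k j =
      d k * N k j + if h : (k : ℕ) = 0 then 0 else N ⟨k - 1, by omega⟩ j := by
  rw [mul_apply, ← add_sum_erase _ _ (mem_univ k)]
  simp only [lowerBidiagonal, of_apply]
  congr 1
  split_ifs with hk
  · refine sum_eq_zero fun l hl => ?_
    rw [if_neg (ne_of_mem_erase hl).symm, if_neg (by omega), zero_mul]
  · have hmem : (⟨k - 1, by omega⟩ : Fin n) ∈ univ.erase k := by
      simp only [mem_erase, ne_eq, Fin.ext_iff, mem_univ, and_true]; omega
    rw [sum_eq_single_of_mem _ hmem fun l hl hne => ?_]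
    · rw [if_neg (ne_of_mem_erase hmem).symm, if_pos (by dsimp only; omega), one_mul]
    · rw [if_neg (ne_of_mem_erase hl).symm,
        if_neg fun h => hne (Fin.ext (by dsimp only; omega)), zero_mul]

end Matrix

section Rectangle

variable {A : Type*} [CommRing A] {f e : ℕ} (x : Fin f → A)

noncomputable def genSeriesOn (y : Fin e → A) (s : Finset (Fin f)) : A⟦X⟧ :=
  (∏ j, (1 - C (y j) * X)) * ∏ i ∈ s, mk fun n => x i ^ n

theorem genSeries_eq_genSeriesOn_univ (y : Fin e → A) : genSeries x y = genSeriesOn x y univ :=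
  rfl

theorem prod_one_sub_mul_genSeriesOn (y : Fin e → A) {s t : Finset (Fin f)} (hst : s ⊆ t) :
    (∏ i ∈ t \ s, (1 - C (x i) * X)) * genSeriesOn x y t = genSeriesOn x y s := by
  have hcancel : (∏ i ∈ t \ s, (1 - C (x i) * X)) * ∏ i ∈ t \ s, mk (x i ^ ·) = 1 := by
    simp only [← prod_mul_distrib, one_sub_C_mul_X_mul_mk_pow, prod_const_one]
  rw [genSeriesOn, genSeriesOn, ← prod_sdiff hst]
  linear_combination ((∏ j, (1 - C (y j) * X)) * ∏ i ∈ s, mk (x i ^ ·)) * hcancel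

theorem genSeriesOn_succ (y : Fin (e + 1) → A) (s : Finset (Fin f)) :
    genSeriesOn x y s = (1 - C (y (Fin.last e)) * X) * genSeriesOn x (Fin.init y) s := by
  rw [genSeriesOn, genSeriesOn, Fin.prod_univ_castSucc, mul_comm _ (1 - _), mul_assoc]
  rfl

theorem constantCoeff_genSeriesOn (y : Fin e → A) (s : Finset (Fin f)) :
    constantCoeff (genSeriesOn x y s) = 1 := by
  simp [genSeriesOn, map_prod]

noncomputable def flagMatrix (y : Fin e → A) : Matrix (Fin f) (Fin f) A :=
  of fun k j => coeffInt (e + j - k) (genSeriesOn x y (Iic k))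

noncomputable def flagReduction : Matrix (Fin f) (Fin f) A :=
  of fun k i => coeffInt (i - k) (∏ l ∈ (Iic k)ᶜ, (1 - C (x l) * X))

theorem det_flagReduction : (flagReduction x).det = 1 := by
  rw [det_of_isUpperTriangular]
  · simp [flagReduction, coeffInt_zero, map_prod]
  · intro k i (hik : i < k)
    exact coeffInt_of_neg (by have := Fin.lt_def.1 hik; omega) _

theorem flagReduction_mul (y : Fin e → A) :
    flagReduction x * of (fun k j : Fin f => coeffInt (e + j - k) (genSeries x y)) =
      flagMatrix x y := by
  ext k j
  set Δ := ∏ l ∈ (Iic k)ᶜ, (1 - C (x l) * X) with hΔ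
  have hΔ_deg : ∀ r, f - k ≤ r → coeff r Δ = 0 := fun r hr => by
    rw [← coeffInt_natCast, coeffInt_prod_one_sub_C_mul_X]
    simp only [card_compl, Fin.card_Iic, Fintype.card_fin]
    omega
  have hrow : genSeriesOn x y (Iic k) = Δ * genSeries x y := by
    rw [hΔ, compl_eq_univ_sdiff, genSeries_eq_genSeriesOn_univ,
      prod_one_sub_mul_genSeriesOn x y (subset_univ _)]
  rw [flagMatrix, of_apply, hrow, coeffInt_mul hΔ_deg, mul_apply]
  simp only [flagReduction, of_apply]
  rw [Fin.sum_univ_eq_sum_range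
      (fun i : ℕ => coeffInt (i - k) Δ * coeffInt (e + j - i) (genSeries x y)),
    ← sum_range_add_sum_Ico _ k.isLt.le, sum_Ico_eq_sum_range]
  rw [sum_eq_zero fun i hi => by
    rw [coeffInt_of_neg (by rw [mem_range] at hi; omega), zero_mul], zero_add]
  refine sum_congr rfl fun r _ => ?_
  rw [show ((k + r : ℕ) : ℤ) - k = r by push_cast; ring, coeffInt_natCast]
  congr 2
  push_cast
  ring

theorem coeffInt_genSeriesOn_Iio (y : Fin e → A) (k j : Fin f) :
    coeffInt (e + 1 + j - k) (genSeriesOn x y (Iio k)) =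
      if h : (k : ℕ) = 0 then 0 else flagMatrix x y ⟨k - 1, by omega⟩ j := by
  split_ifs with hk
  · have hempty : Iio k = ∅ := by
      ext l; simp only [mem_Iio, notMem_empty, iff_false, Fin.lt_def]; omega
    rw [hempty, genSeriesOn, prod_empty, mul_one, coeffInt_prod_one_sub_C_mul_X]
    rw [card_univ, Fintype.card_fin]
    omega
  · have hIio : Iio k = Iic ⟨k - 1, by omega⟩ := by
      ext l; simp only [mem_Iio, mem_Iic, Fin.lt_def, Fin.le_def]; omega
    rw [hIio, flagMatrix, of_apply]
    congr 1
    push_cast [Nat.one_le_iff_ne_zero.2 hk]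
    ring

theorem flagMatrix_succ (y : Fin (e + 1) → A) :
    flagMatrix x y =
      lowerBidiagonal (fun k => x k - y (Fin.last e)) * flagMatrix x (Fin.init y) := by
  ext k j
  rw [lowerBidiagonal_mul_apply, ← coeffInt_genSeriesOn_Iio]
  have hk : Iic k \ Iio k = {k} := by
    ext l; simp only [mem_sdiff, mem_Iic, mem_Iio, not_lt, mem_singleton, le_antisymm_iff]
  have hx := prod_one_sub_mul_genSeriesOn x (Fin.init y) (Iio_subset_Iic_self (a := k))
  rw [hk, prod_singleton] at hx
  simp only [flagMatrix, of_apply, genSeriesOn_succ x y, ← hx, coeffInt_one_sub_C_mul_X_mul]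
  push_cast
  rw [show (e : ℤ) + 1 + j - k - 1 = e + j - k by ring]
  ring

theorem det_flagMatrix_of_isEmpty (y : Fin 0 → A) : (flagMatrix x y).det = 1 := by
  rw [det_of_isUpperTriangular]
  · simp [flagMatrix, coeffInt_zero, constantCoeff_genSeriesOn]
  · intro k j (hjk : j < k)
    exact coeffInt_of_neg (by have := Fin.lt_def.1 hjk; omega) _

theorem det_flagMatrix (y : Fin e → A) : (flagMatrix x y).det = ∏ i, ∏ j, (x i - y j) := by
  induction e with
  | zero => simp [det_flagMatrix_of_isEmpty]
  | succ e ih =>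
    simp only [flagMatrix_succ, det_mul, det_lowerBidiagonal, ih, Fin.prod_univ_castSucc,
      prod_mul_distrib]
    exact mul_comm _ _

end Rectangle

/-- **Rectangle Schur determinant as a product.**  For `R = (e)^f`,
`s_R(x − y) = ∏_{i=1}^f ∏_{j=1}^e (x_i − y_j)`. -/
theorem rectangle_schur_eq_prod {A : Type*} [CommRing A] {f e : ℕ}
    (x : Fin f → A) (y : Fin e → A) :
    schurDet x y (fun _ : Fin f => (e : ℤ)) = ∏ i : Fin f, ∏ j : Fin e, (x i - y j) := by
  calc schurDet x y (fun _ : Fin f => (e : ℤ))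
      = (flagReduction x * of fun k j : Fin f => coeffInt (e + j - k) (genSeries x y)).det := by
        rw [det_mul, det_flagReduction, one_mul]
        rfl
    _ = ∏ i : Fin f, ∏ j : Fin e, (x i - y j) := by rw [flagReduction_mul, det_flagMatrix]
end

section
/- Let A be a commutative ring, h : ℤ → A any function, p ≥ 1, and I = (I_1, …, I_p) any sequence of integers. Consider the determinant s_I := det( h(I_i + j − i) )_{1 ≤ i, j ≤ p}. (a) If I_a − a = I_b − b for some a ≠ b, then s_I = 0. (b) If the integers I_1 − 1, I_2 − 2, …, I_p − p are pairwise distinct, let w be the unique permutation of {1, …, p} for which I_{w(1)} − w(1) > I_{w(2)} − w(2) > ⋯ > I_{w(p)} − w(p), and set λ_i := I_{w(i)} − w(i) + i for 1 ≤ i ≤ p. Then λ = (λ_1, …, λ_p) is weakly decreasing and s_I = sign(w) · det( h(λ_i + j − i) )_{1 ≤ i, j ≤ p}. (This is the straightening rule by which the paper writes s_I as 0 or ± s_λ for a unique partition λ and sign, via the moves (…, a, b, …) ↦ (…, b − 1, a + 1, …).) -/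
open scoped BigOperators

/-- **Straightening rule for Jacobi–Trudi-type determinants.**
For any function `h : ℤ → A` and integer sequence `I = (I_1, …, I_p)`, consider
`s_I := det(h(I_i + j − i))_{1 ≤ i,j ≤ p}`.

(a) If `I_a − a = I_b − b` for some `a ≠ b`, then `s_I = 0`.

(b) If `w` is a permutation of `{1, …, p}` such that `i ↦ I_{w(i)} − w(i)` is strictly
decreasing, then `λ_i := I_{w(i)} − w(i) + i` is weakly decreasing and
`s_I = sign(w) · det(h(λ_i + j − i))`. -/
theorem straightening_rule {A : Type*} [CommRing A] (h : ℤ → A) {p : ℕ} (hp : 1 ≤ p)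
    (I : Fin p → ℤ) :
    ((∃ a b : Fin p, a ≠ b ∧ I a - (a : ℤ) = I b - (b : ℤ)) →
      Matrix.det (Matrix.of fun i j : Fin p => h (I i + (j : ℤ) - (i : ℤ))) = 0) ∧
    (∀ w : Equiv.Perm (Fin p),
      StrictAnti (fun i : Fin p => I (w i) - ((w i : Fin p) : ℤ)) →
      Antitone (fun i : Fin p => I (w i) - ((w i : Fin p) : ℤ) + (i : ℤ)) ∧
      Matrix.det (Matrix.of fun i j : Fin p => h (I i + (j : ℤ) - (i : ℤ))) =
        (Equiv.Perm.sign w : ℤ) •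
          Matrix.det (Matrix.of fun i j : Fin p =>
            h ((I (w i) - ((w i : Fin p) : ℤ) + (i : ℤ)) + (j : ℤ) - (i : ℤ)))) := by
  constructor
  · rintro ⟨a, b, hab, heq⟩
    apply Matrix.det_zero_of_row_eq hab
    funext j
    simp only [Matrix.of_apply]
    congr 1
    omega
  · intro w hw
    set f : Fin p → ℤ := fun i => I (w i) - ((w i : Fin p) : ℤ) with hf
    have claim : ∀ n : ℕ, ∀ i j : Fin p, (j : ℕ) = (i : ℕ) + n →
        f j + (j : ℤ) ≤ f i + (i : ℤ) := by
      intro n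
      induction n with
      | zero => intro i j hij; have : i = j := Fin.ext (by omega); subst this; exact le_refl _
      | succ n ih =>
        intro i j hij
        have hk : (i : ℕ) + n < p := by omega
        set k : Fin p := ⟨(i : ℕ) + n, by omega⟩ with hkdef
        have hkj : k < j := by
          rw [Fin.lt_def]; simp [hkdef]; omega
        have h1 : f j < f k := hw hkj
        have h2 : f j + (j : ℤ) ≤ f k + (k : ℤ) := by
          have : (j : ℤ) = (k : ℤ) + 1 := by simp [hkdef]; omega
          omega
        exact h2.trans (ih i k (by simp [hkdef]))
    constructor
    · intro i j hij
      exact claim ((j : ℕ) - (i : ℕ)) i j (by omega)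
    · have key : (Matrix.of fun i j : Fin p =>
          h ((I (w i) - ((w i : Fin p) : ℤ) + (i : ℤ)) + (j : ℤ) - (i : ℤ))) =
          (Matrix.of fun i j : Fin p => h (I i + (j : ℤ) - (i : ℤ))).submatrix w id := by
        funext i j
        simp only [Matrix.of_apply, Matrix.submatrix_apply, id]
        congr 1
        ring
      rw [key, Matrix.det_permute]
      rcases Int.units_eq_one_or (Equiv.Perm.sign w) with hs | hs <;> simp [hs]
end

section
/- Let r = (r_{ij})_{0 ≤ i ≤ j ≤ n} be nonnegative integers satisfying the rank conditions (★), and fix 1 ≤ i ≤ n. Let σ be a partition with ℓ(σ) ≤ h_{i−1,i+1} and σ_1 ≤ w_{i−1,i+1} if 1 ≤ i ≤ n−1, and σ empty if i = n; let τ be a partition with ℓ(τ) ≤ h_{i−2,i} and τ_1 ≤ w_{i−2,i} if 2 ≤ i ≤ n, and τ empty if i = 1. Then ℓ(σ) ≤ h_{i−1,i}, and the attached sequence (w_{i−1,i} + σ_1, w_{i−1,i} + σ_2, …, w_{i−1,i} + σ_{h_{i−1,i}}, τ_1, τ_2, …, τ_{ℓ(τ)}) — where σ is padded with zeros to length h_{i−1,i}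 — is weakly decreasing, i.e. is a partition. (This is the paper's observation that for any division of R_{i−1,i+1} into σ(i) and τ(i), σ(i) fits on the right side of R_i and τ(i) fits below R_{i+1}, so the sequences λ(i) in Corollary 2 are always partitions.) -/
open scoped BigOperators

/-- **Attached sequences are partitions.**
Let `r = (r_{ij})_{0 ≤ i ≤ j ≤ n}` satisfy the rank conditions (★).  Write
`w_{ij} = r_{i,j−1} − r_{ij}` and `h_{ij} = r_{i+1,j} − r_{ij}` for the width and height
of the rectangle `R_{ij}`.  Fix `1 ≤ i ≤ n`, let `σ` be a partition fitting in
`R_{i−1,i+1}` (with `σ` empty if `i = n`), and let `τ` be a partition fitting in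
`R_{i−2,i}` (with `τ` empty if `i = 1`); partitions are recorded as antitone functions
`ℕ → ℕ` listing their parts (0-indexed, padded by zeros).  Then `ℓ(σ) ≤ h_{i−1,i}`, and
the attached sequence
`(w_{i−1,i} + σ_1, …, w_{i−1,i} + σ_{h_{i−1,i}}, τ_1, τ_2, …)` is weakly decreasing,
i.e. is a partition. -/
theorem attached_sequence_is_partition
    (n : ℕ) (r : ℕ → ℕ → ℕ)
    (hstar1 : ∀ i j : ℕ, i < j → j ≤ n → r i j ≤ r i (j - 1) ∧ r i j ≤ r (i + 1) j)
    (hstar2 : ∀ i j : ℕ, i + 1 < j → j ≤ n →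
      r i (j - 1) + r (i + 1) j ≤ r (i + 1) (j - 1) + r i j)
    (i : ℕ) (hi1 : 1 ≤ i) (hin : i ≤ n)
    (σ τ : ℕ → ℕ) (hσa : Antitone σ) (hτa : Antitone τ)
    (hσ : i < n →
      (∀ k : ℕ, r i (i + 1) - r (i - 1) (i + 1) ≤ k → σ k = 0) ∧
        σ 0 ≤ r (i - 1) i - r (i - 1) (i + 1))
    (hσn : i = n → σ = fun _ => 0)
    (hτ : 2 ≤ i →
      (∀ k : ℕ, r (i - 1) i - r (i - 2) i ≤ k → τ k = 0) ∧
        τ 0 ≤ r (i - 2) (i - 1) - r (i - 2) i)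
    (hτ1 : i = 1 → τ = fun _ => 0) :
    (∀ k : ℕ, r i i - r (i - 1) i ≤ k → σ k = 0) ∧
      Antitone (fun k : ℕ =>
        if k < r i i - r (i - 1) i then
          (r (i - 1) (i - 1) - r (i - 1) i) + σ k
        else τ (k - (r i i - r (i - 1) i))) := by
  have e1 : i - 1 + 1 = i := by omega
  -- basic (★) facts
  have h1 := hstar1 (i - 1) i (by omega) hin
  rw [e1] at h1
  -- h1 : r (i-1) i ≤ r (i-1) (i-1) ∧ r (i-1) i ≤ r i i
  -- Part 1: σ vanishes from h_{i-1,i} on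
  have part1 : ∀ k : ℕ, r i i - r (i - 1) i ≤ k → σ k = 0 := by
    intro k hk
    rcases eq_or_lt_of_le hin with hEq | hlt
    · simp [hσn hEq]
    · have h2 := hstar2 (i - 1) (i + 1) (by omega) (by omega)
      rw [e1] at h2
      simp only [Nat.add_sub_cancel] at h2
      -- h2 : r (i-1) i + r i (i+1) ≤ r i i + r (i-1) (i+1)
      have h3 := hstar1 (i - 1) (i + 1) (by omega) (by omega)
      rw [e1] at h3
      simp only [Nat.add_sub_cancel] at h3
      exact (hσ hlt).1 k (by omega)
  refine ⟨part1, ?_⟩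
  -- τ 0 fits under the width w_{i-1,i}
  have key : τ 0 ≤ r (i - 1) (i - 1) - r (i - 1) i := by
    rcases eq_or_lt_of_le hi1 with hEq | h2i
    · simp [hτ1 hEq.symm]
    · have e2 : i - 2 + 1 = i - 1 := by omega
      have h2 := hstar2 (i - 2) i (by omega) hin
      rw [e2] at h2
      -- h2 : r (i-2) (i-1) + r (i-1) i ≤ r (i-1) (i-1) + r (i-2) i
      have h3 := hstar1 (i - 2) i (by omega) hin
      rw [e2] at h3
      have h4 := (hτ h2i).2
      omega
  -- Part 2: the attached sequence is weakly decreasing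
  intro j k hjk
  simp only
  set h := r i i - r (i - 1) i with hh
  set w := r (i - 1) (i - 1) - r (i - 1) i with hw
  by_cases hkh : k < h
  · have hjh : j < h := lt_of_le_of_lt hjk hkh
    rw [if_pos hkh, if_pos hjh]
    exact Nat.add_le_add_left (hσa hjk) w
  · rw [if_neg hkh]
    by_cases hjh : j < h
    · rw [if_pos hjh]
      calc τ (k - h) ≤ τ 0 := hτa (Nat.zero_le _)
        _ ≤ w := key
        _ ≤ w + σ j := Nat.le_add_right _ _
    · rw [if_neg hjh]
      exact hτa (Nat.sub_le_sub_right hjk h)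
end

section
/- Let k be a field and let r = (r_{ij})_{0 ≤ i ≤ j ≤ n} be nonnegative integers satisfying the rank conditions (★), with e_i := r_{ii}. Then there exist linear maps φ_i : k^{e_{i−1}} → k^{e_i} (1 ≤ i ≤ n) such that rank(φ_j ∘ φ_{j−1} ∘ ⋯ ∘ φ_{i+1}) = r_{ij} for all 0 ≤ i < j ≤ n. That is, every collection of rank conditions satisfying (★) actually occurs, i.e. equality in all the rank conditions can be achieved simultaneously. -/
/-- The composite `φ_{i+d} ∘ ⋯ ∘ φ_{i+1} : V_i → V_{i+d}` of `d` consecutive maps in a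
sequence of linear maps (indexed so that `φ i : V i → V (i+1)`); for `d = 0` it is the
identity. -/
def lcomp {k : Type*} [Field k] {V : ℕ → Type*} [∀ i, AddCommGroup (V i)]
    [∀ i, Module k (V i)] (φ : ∀ i, V i →ₗ[k] V (i + 1)) : ∀ i d : ℕ, V i →ₗ[k] V (i + d)
  | _, 0 => LinearMap.id
  | i, d + 1 => (φ (i + d)).comp (lcomp φ i d)

/-!
The maps realise `r` as a direct sum of interval representations. Number the basis of
`k^{e_i}` so that the `t`-th basis vector survives to level `j` exactly when `t < r i j`. The
vectors of level `i` dying at level `b` then form the block `[r i (b+1), r i b)`, and the third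
condition of (★) says that this block is no longer than the block `[r (i+1) (b+1), r (i+1) b)`
of level `i + 1`; so `φ_{i+1}` shifts the former into the latter and kills the vectors dying at
level `i`. Each composite sends the first `r i j` basis vectors injectively to basis vectors and
the others to `0`, hence has rank `r i j`.
-/

open Module

namespace RankConditions

section IndexMaps

variable {k : Type*} [Field k]

variable (k) in
/-- The `s`-th standard basis vector of `k^m`, or `0` when `m ≤ s`. -/
def natSingle (m s : ℕ) : Fin m → k := fun u => if (u : ℕ) = s then 1 else 0

theorem natSingle_val {m : ℕ} (t : Fin m) : natSingle k m t = Pi.single t 1 := by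
  ext u
  simp [natSingle, Pi.single_apply, Fin.val_inj]

variable (k) in
def indexMap (m l c : ℕ) (g : ℕ → ℕ) : (Fin m → k) →ₗ[k] (Fin l → k) :=
  Matrix.toLin' (Matrix.of fun (s : Fin l) (t : Fin m) =>
    if (t : ℕ) < c then natSingle k l (g t) s else 0)

theorem indexMap_natSingle {m l c : ℕ} {g : ℕ → ℕ} {s : ℕ} (hs : s < m) :
    indexMap k m l c g (natSingle k m s) = if s < c then natSingle k l (g s) else 0 := by
  rw [show s = ((⟨s, hs⟩ : Fin m) : ℕ) from rfl, natSingle_val, indexMap, Matrix.toLin'_apply,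
    Matrix.mulVec_single_one]
  ext u
  split_ifs <;> simp [*]

theorem finrank_range_eq_of_natSingle {m l c : ℕ} (f : (Fin m → k) →ₗ[k] (Fin l → k))
    {g : ℕ → ℕ} (hc : c ≤ m) (hgl : ∀ t < c, g t < l) (hg : Set.InjOn g (Set.Iio c))
    (hf : ∀ t < m, f (natSingle k m t) = if t < c then natSingle k l (g t) else 0) :
    finrank k (LinearMap.range f) = c := by
  set v : Fin c → Fin l → k := fun u => Pi.basisFun k (Fin l) ⟨g u, hgl u u.2⟩ with hv_def
  have hv_eq (u : Fin c) : v u = natSingle k l (g u) := by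
    simp only [hv_def, Pi.basisFun_apply, ← natSingle_val]
  have hv : LinearIndependent k v :=
    (Pi.basisFun k _).linearIndependent.comp _
      fun u u' h => Fin.ext (hg u.2 u'.2 (congrArg Fin.val h))
  suffices LinearMap.range f = Submodule.span k (Set.range v) by
    rw [this, finrank_span_eq_card hv, Fintype.card_fin]
  rw [LinearMap.range_eq_map, ← (Pi.basisFun k (Fin m)).span_eq, Submodule.map_span,
    ← Set.range_comp]
  apply le_antisymm <;> rw [Submodule.span_le]
  · rintro _ ⟨t, rfl⟩
    simp only [Function.comp_apply, Pi.basisFun_apply, ← natSingle_val, hf t t.2]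
    split_ifs with h
    · exact Submodule.subset_span ⟨⟨t, h⟩, hv_eq _⟩
    · exact zero_mem _
  · rintro _ ⟨u, rfl⟩
    refine Submodule.subset_span ⟨⟨u, u.2.trans_le hc⟩, ?_⟩
    simp only [Function.comp_apply, Pi.basisFun_apply, ← natSingle_val, hf _ (u.2.trans_le hc),
      if_pos u.2, hv_eq]

end IndexMaps

/-- The rank conditions (★) for an array `R` that vanishes beyond column `N`; `square i j` is the
third condition at `(i, j + 1)`. -/
structure IsRankArray (N : ℕ) (R : ℕ → ℕ → ℕ) : Prop where
  antitoneOn : ∀ i, AntitoneOn (R i) (Set.Ici i)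
  square : ∀ i j, i < j → R i j + R (i + 1) (j + 1) ≤ R (i + 1) j + R i (j + 1)
  eq_zero : ∀ i j, N < j → R i j = 0

section Barcode

variable {N : ℕ} {R : ℕ → ℕ → ℕ}

theorem IsRankArray.antitone (hR : IsRankArray N R) {i j j' : ℕ} (hij : i ≤ j)
    (hjj' : j ≤ j') : R i j' ≤ R i j :=
  hR.antitoneOn i hij (hij.trans hjj') hjj'

variable (N R) in
def deathTime (i t : ℕ) : ℕ := Nat.findGreatest (fun j => t < R i j) N

theorem lt_iff_le_deathTime (hR : IsRankArray N R) {i j t : ℕ} (ht : t < R i i) (hij : i ≤ j) :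
    t < R i j ↔ j ≤ deathTime N R i t := by
  have hiN : i ≤ N := by
    by_contra h
    rw [hR.eq_zero i i (by omega)] at ht
    omega
  have hspec : t < R i (deathTime N R i t) :=
    Nat.findGreatest_spec (P := fun j => t < R i j) hiN ht
  refine ⟨fun h => Nat.le_findGreatest ?_ h, fun h => hspec.trans_le (hR.antitone hij h)⟩
  by_contra hjN
  rw [hR.eq_zero i j (by omega)] at h
  omega

variable (N R) in
/-- Shifts the block `[R i (b+1), R i b)` of vectors dying at `b = deathTime N R i t` to the
start of the block `[R (i+1) (b+1), R (i+1) b)`. -/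
def nextIndex (i t : ℕ) : ℕ :=
  R (i + 1) (deathTime N R i t + 1) + (t - R i (deathTime N R i t + 1))

theorem nextIndex_lt_iff (hR : IsRankArray N R) {i j t : ℕ} (ht : t < R i (i + 1))
    (hij : i + 1 ≤ j) : nextIndex N R i t < R (i + 1) j ↔ t < R i j := by
  have ht₀ : t < R i i := ht.trans_le (hR.antitone le_rfl (Nat.le_succ i))
  rw [nextIndex]
  set b := deathTime N R i t
  have hb : i + 1 ≤ b := (lt_iff_le_deathTime hR ht₀ (Nat.le_succ i)).1 ht
  have hbt : R i (b + 1) ≤ t :=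
    not_lt.1 fun h => by have := (lt_iff_le_deathTime hR ht₀ (j := b + 1) (by omega)).1 h; omega
  have htb : t < R i b := (lt_iff_le_deathTime hR ht₀ (by omega)).2 le_rfl
  have hsq := hR.square i b (by omega)
  rw [lt_iff_le_deathTime hR ht₀ (by omega)]
  constructor
  · intro h
    by_contra! hbj
    have := hR.antitone (i := i + 1) (by omega) (show b + 1 ≤ j by omega)
    omega
  · intro (hjb : j ≤ b)
    have := hR.antitone hij hjb
    omega

theorem deathTime_nextIndex (hR : IsRankArray N R) {i t : ℕ} (ht : t < R i (i + 1)) :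
    deathTime N R (i + 1) (nextIndex N R i t) = deathTime N R i t := by
  have ht₀ : t < R i i := ht.trans_le (hR.antitone le_rfl (Nat.le_succ i))
  have hnext : nextIndex N R i t < R (i + 1) (i + 1) := (nextIndex_lt_iff hR ht le_rfl).2 ht
  have key : ∀ j, i + 1 ≤ j →
      (j ≤ deathTime N R (i + 1) (nextIndex N R i t) ↔ j ≤ deathTime N R i t) := by
    intro j hj
    rw [← lt_iff_le_deathTime hR hnext hj, ← lt_iff_le_deathTime hR ht₀ (by omega),
      nextIndex_lt_iff hR ht hj]
  have hb : i + 1 ≤ deathTime N R i t := (lt_iff_le_deathTime hR ht₀ (Nat.le_succ i)).1 ht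
  exact le_antisymm ((key _ ((key _ le_rfl).2 hb)).1 le_rfl) ((key _ hb).2 le_rfl)

theorem deathTime_succ_le (hR : IsRankArray N R) {i t : ℕ} (ht : t < R i i) :
    R i (deathTime N R i t + 1) ≤ t := by
  have hi : i ≤ deathTime N R i t := (lt_iff_le_deathTime hR ht le_rfl).1 ht
  exact not_lt.1 fun h => by have := (lt_iff_le_deathTime hR ht (by omega)).1 h; omega

theorem nextIndex_injOn (hR : IsRankArray N R) (i : ℕ) :
    Set.InjOn (nextIndex N R i) (Set.Iio (R i (i + 1))) := by
  intro t ht t' ht' h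
  have hb : deathTime N R i t = deathTime N R i t' := by
    rw [← deathTime_nextIndex hR ht, ← deathTime_nextIndex hR ht', h]
  have hle : ∀ {s}, s < R i (i + 1) → R i (deathTime N R i s + 1) ≤ s := fun hs =>
    deathTime_succ_le hR (hs.trans_le (hR.antitone le_rfl (Nat.le_succ i)))
  have h₁ := hle ht
  have h₂ := hle ht'
  rw [nextIndex, nextIndex, hb] at h
  rw [hb] at h₁
  omega

variable (N R) in
def iterIndex (i : ℕ) : ℕ → ℕ → ℕ
  | 0, t => t
  | d + 1, t => nextIndex N R (i + d) (iterIndex i d t)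

theorem iterIndex_lt_iff (hR : IsRankArray N R) {i : ℕ} :
    ∀ {d t}, t < R i (i + d) → ∀ {j}, i + d ≤ j →
      (iterIndex N R i d t < R (i + d) j ↔ t < R i j)
  | 0, _, _, _, _ => Iff.rfl
  | d + 1, t, ht, j, hj => by
    have ht' : t < R i (i + d) := ht.trans_le (hR.antitone (Nat.le_add_right i d) (by omega))
    have hnext : iterIndex N R i d t < R (i + d) (i + d + 1) :=
      (iterIndex_lt_iff hR ht' (by omega)).2 ht
    exact (nextIndex_lt_iff hR hnext hj).trans (iterIndex_lt_iff hR ht' (by omega))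

theorem iterIndex_injOn (hR : IsRankArray N R) (i : ℕ) :
    ∀ d, Set.InjOn (iterIndex N R i d) (Set.Iio (R i (i + d)))
  | 0 => Function.injective_id.injOn
  | d + 1 => fun t ht t' ht' h => by
    have hle : R i (i + (d + 1)) ≤ R i (i + d) := hR.antitone (Nat.le_add_right i d) (by omega)
    have hnext {s} (hs : s < R i (i + (d + 1))) : iterIndex N R i d s < R (i + d) (i + d + 1) :=
      (iterIndex_lt_iff hR (hs.trans_le hle) (by omega)).2 hs
    exact iterIndex_injOn hR i d (ht.trans_le hle) (ht'.trans_le hle)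
      (nextIndex_injOn hR (i + d) (hnext ht) (hnext ht') h)

end Barcode

section Maps

variable {k : Type*} [Field k] {N : ℕ} {R : ℕ → ℕ → ℕ} {e : ℕ → ℕ}

variable (k N R e) in
def stepMap (i : ℕ) : (Fin (e i) → k) →ₗ[k] (Fin (e (i + 1)) → k) :=
  indexMap k (e i) (e (i + 1)) (R i (i + 1)) (nextIndex N R i)

theorem lcomp_stepMap_natSingle (hR : IsRankArray N R) (he : ∀ j ≤ N, e j = R j j) {i : ℕ} :
    ∀ {d}, i + d ≤ N → ∀ {t}, t < e i →
      lcomp (stepMap k N R e) i d (natSingle k (e i) t) =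
        if t < R i (i + d) then natSingle k (e (i + d)) (iterIndex N R i d t) else 0
  | 0, hd, t, ht => by
    rw [if_pos (he i (by omega) ▸ ht)]
    rfl
  | d + 1, hd, t, ht => by
    change stepMap k N R e (i + d) (lcomp (stepMap k N R e) i d (natSingle k (e i) t)) = _
    rw [lcomp_stepMap_natSingle hR he (by omega) ht]
    by_cases htd : t < R i (i + d)
    · have hlt : iterIndex N R i d t < e (i + d) := by
        rw [he _ (by omega)]
        exact (iterIndex_lt_iff hR htd le_rfl).2 htd
      rw [if_pos htd, stepMap, indexMap_natSingle hlt]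
      exact if_congr (iterIndex_lt_iff hR htd (by omega)) rfl rfl
    · rw [if_neg htd, map_zero, if_neg fun h =>
        htd (h.trans_le (hR.antitone (Nat.le_add_right i d) (by omega)))]

theorem finrank_range_lcomp_stepMap (hR : IsRankArray N R) (he : ∀ j ≤ N, e j = R j j)
    {i d : ℕ} (hd : i + d ≤ N) :
    finrank k (LinearMap.range (lcomp (stepMap k N R e) i d)) = R i (i + d) := by
  refine finrank_range_eq_of_natSingle _ ?_ (fun t ht => ?_) (iterIndex_injOn hR i d)
    (fun t ht => lcomp_stepMap_natSingle hR he hd ht)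
  · rw [he i (by omega)]
    exact hR.antitone le_rfl (Nat.le_add_right i d)
  · rw [he _ hd]
    exact (iterIndex_lt_iff hR ht le_rfl).2 ht

end Maps

def rankExt (n : ℕ) (r : ℕ → ℕ → ℕ) (i j : ℕ) : ℕ := if j ≤ n then r i j else 0

theorem isRankArray_rankExt {n : ℕ} {r : ℕ → ℕ → ℕ}
    (hstar1 : ∀ i j : ℕ, i < j → j ≤ n → r i j ≤ r i (j - 1) ∧ r i j ≤ r (i + 1) j)
    (hstar2 : ∀ i j : ℕ, i + 1 < j → j ≤ n →
      r i (j - 1) + r (i + 1) j ≤ r (i + 1) (j - 1) + r i j) :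
    IsRankArray n (rankExt n r) where
  antitoneOn i := antitoneOn_nat_Ici_of_succ_le fun j hj => by
    unfold rankExt
    split_ifs with h₁ h₂
    · exact (hstar1 i (j + 1) (by omega) h₁).1
    · omega
    · exact Nat.zero_le _
    · exact le_rfl
  square i j hij := by
    unfold rankExt
    rcases lt_trichotomy j n with hjn | rfl | hjn
    · simpa [hjn.le, hjn] using hstar2 i (j + 1) (by omega) hjn
    · simpa using (hstar1 i j hij le_rfl).2
    · simp [show ¬ j ≤ n by omega, show ¬ j + 1 ≤ n by omega]
  eq_zero i j hj := if_neg (by omega)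

end RankConditions

open RankConditions in
/-- **Every set of rank conditions satisfying (★) occurs.**  Given nonnegative integers
`r = (r_{ij})_{0 ≤ i ≤ j ≤ n}` satisfying the rank conditions (★), with `e_i = r_{ii}`,
there exist linear maps `φ_i : k^{e_{i−1}} → k^{e_i}` whose composites have exactly the
prescribed ranks: `rank(φ_j ∘ ⋯ ∘ φ_{i+1}) = r_{ij}` for all `0 ≤ i < j ≤ n`. -/
theorem rank_conditions_occur (k : Type*) [Field k] (n : ℕ) (r : ℕ → ℕ → ℕ)
    (hstar1 : ∀ i j : ℕ, i < j → j ≤ n → r i j ≤ r i (j - 1) ∧ r i j ≤ r (i + 1) j)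
    (hstar2 : ∀ i j : ℕ, i + 1 < j → j ≤ n →
      r i (j - 1) + r (i + 1) j ≤ r (i + 1) (j - 1) + r i j) :
    ∃ φ : ∀ i : ℕ, (Fin (r i i) → k) →ₗ[k] (Fin (r (i + 1) (i + 1)) → k),
      ∀ i j : ℕ, i < j → j ≤ n →
        Module.finrank k (LinearMap.range (lcomp φ i (j - i))) = r i j := by
  refine ⟨stepMap k n (rankExt n r) (fun i => r i i), fun i j hij hjn => ?_⟩
  obtain ⟨d, rfl⟩ := Nat.exists_eq_add_of_le hij.le
  rw [Nat.add_sub_cancel_left, finrank_range_lcomp_stepMap (isRankArray_rankExt hstar1 hstar2)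
    (fun j hj => (if_pos hj).symm) hjn]
  exact if_pos hjn
end
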